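/- Let p be a binary path and draw arcs as follows: for each 10-pair eliminated at any stage E^k(p) of the 10-elimination, join the original positions in p of the corresponding 1 and 0 by an arc (1 on the left, 0 on the right). Then the arcs form a non-crossing matching: no two arcs cross, every arc joins a 1 (left endpoint) to a 0 (right endpoint), and the time evolution T_∞(p), obtained by swapping the letters at the two endpoints of every arc, preserves the number of 1s in p. -/

import Mathlib

/-!
A 10-pair eliminated from `E^k(p)` is adjacent in `E^k(p)`, and the endpoints of every later arc
are letters surviving in `E^k(p)`; so no endpoint of another arc lies strictly between its two
ends, which rules out crossings. Each letter is eliminated at most once, so all arc endpoints are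
distinct. Every arc has a 1 at its left and a 0 at its right end, hence swapping along the arcs
turns exactly as many 1s into 0s as 0s into 1s.
-/

/-- 10-elimination on a word whose letters carry their original positions in
`p`; also returns the arcs (original position of the 1, original position of
the 0) of the eliminated 10-pairs. -/
def elimIdx : List (ℕ × Bool) → List (ℕ × Bool) × List (ℕ × ℕ)
  | [] => ([], [])
  | (i, true) :: (j, false) :: rest =>
    ((elimIdx rest).1, (i, j) :: (elimIdx rest).2)
  | x :: rest => (x :: (elimIdx rest).1, (elimIdx rest).2)

/-- All arcs produced during iterated 10-elimination. -/
def allArcs : ℕ → List (ℕ × Bool) → List (ℕ × ℕ)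
  | 0, _ => []
  | fuel + 1, w => (elimIdx w).2 ++ allArcs fuel (elimIdx w).1

/-- The arcs of a path: original positions (0-indexed) of the 1 and the 0 of
every 10-pair eliminated at any stage of the iterated 10-elimination. -/
def arcsOf (p : List Bool) : List (ℕ × ℕ) := allArcs p.length ((List.range p.length).zip p)

/-- The time evolution `T_∞`: swap the letters at the two endpoints of every
arc. -/
def flipArcs (p : List Bool) (arcs : List (ℕ × ℕ)) : List Bool :=
  p.mapIdx (fun i a => if arcs.any (fun e => e.1 == i || e.2 == i) then !a else a)

open List

def indexed (p : List Bool) : List (ℕ × Bool) := (List.range p.length).zip p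

def arcEnds (arcs : List (ℕ × ℕ)) : List ℕ := arcs.flatMap fun a => [a.1, a.2]

def NonCrossing (a b : ℕ × ℕ) : Prop :=
  ¬(a.1 < b.1 ∧ b.1 < a.2 ∧ a.2 < b.2) ∧ ¬(b.1 < a.1 ∧ a.1 < b.2 ∧ b.2 < a.2)

section Indexed

theorem map_fst_indexed (p : List Bool) : (indexed p).map Prod.fst = List.range p.length :=
  List.map_fst_zip (by simp)

theorem map_snd_indexed (p : List Bool) : (indexed p).map Prod.snd = p :=
  List.map_snd_zip (by simp)

theorem mem_indexed {p : List Bool} {i : ℕ} {b : Bool} : (i, b) ∈ indexed p ↔ p[i]? = some b := by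
  rw [indexed, List.mem_iff_getElem, List.getElem?_eq_some_iff]
  constructor
  · rintro ⟨k, hk, he⟩
    simp only [List.getElem_zip, List.getElem_range, Prod.mk.injEq, List.length_zip,
      List.length_range, min_self] at he hk
    obtain ⟨rfl, rfl⟩ := he
    exact ⟨hk, rfl⟩
  · rintro ⟨hi, rfl⟩
    exact ⟨i, by simp [hi], by simp [List.getElem_zip]⟩

theorem nodup_indexed (p : List Bool) : (indexed p).Nodup :=
  List.Nodup.of_map Prod.fst (by rw [map_fst_indexed]; exact List.nodup_range)

theorem mapIdx_eq_map_indexed {β : Type*} (p : List Bool) (f : ℕ → Bool → β) :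
    p.mapIdx f = (indexed p).map (Function.uncurry f) := by
  apply List.ext_getElem <;> simp [indexed, List.getElem_zip]

end Indexed

section Elimination

variable {w : List (ℕ × Bool)}

theorem elimIdx_fst_sublist (w : List (ℕ × Bool)) : (elimIdx w).1 <+ w := by
  induction w using elimIdx.induct with
  | case1 => simp [elimIdx]
  | case2 i j rest ih =>
    simp only [elimIdx]
    exact ih.trans ((List.sublist_cons_self _ _).trans (List.sublist_cons_self _ _))
  | case3 x rest h ih =>
    rw [elimIdx.eq_3 x rest h]
    exact ih.cons_cons x

theorem infix_of_mem_elimIdx_snd {a : ℕ × ℕ} (ha : a ∈ (elimIdx w).2) :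
    [(a.1, true), (a.2, false)] <:+: w := by
  induction w using elimIdx.induct with
  | case1 => simp [elimIdx] at ha
  | case2 i j rest ih =>
    simp only [elimIdx, List.mem_cons] at ha
    rcases ha with rfl | ha
    · exact ⟨[], rest, rfl⟩
    · exact (ih ha).trans ((List.suffix_cons _ _).trans (List.suffix_cons _ _)).isInfix
  | case3 x rest h ih =>
    rw [elimIdx.eq_3 x rest h] at ha
    exact (ih ha).trans (List.suffix_cons _ _).isInfix

theorem elimIdx_perm (w : List (ℕ × Bool)) :
    ((elimIdx w).1.map Prod.fst ++ arcEnds (elimIdx w).2).Perm (w.map Prod.fst) := by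
  induction w using elimIdx.induct with
  | case1 => simp [elimIdx, arcEnds]
  | case2 i j rest ih =>
    simp only [elimIdx, arcEnds, List.flatMap_cons, List.map_cons] at ih ⊢
    exact List.perm_middle.trans ((List.perm_middle.trans (ih.cons j)).cons i)
  | case3 x rest h ih =>
    rw [elimIdx.eq_3 x rest h]
    simpa [arcEnds] using ih.cons x.1

theorem sublist_of_mem_allArcs {fuel : ℕ} {a : ℕ × ℕ} (ha : a ∈ allArcs fuel w) :
    [(a.1, true), (a.2, false)] <+ w := by
  induction fuel generalizing w with
  | zero => simp [allArcs] at ha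
  | succ fuel ih =>
    rcases List.mem_append.mp ha with ha | ha
    · exact (infix_of_mem_elimIdx_snd ha).sublist
    · exact (ih ha).trans (elimIdx_fst_sublist w)

theorem arcEnds_allArcs_subperm (fuel : ℕ) (w : List (ℕ × Bool)) :
    (arcEnds (allArcs fuel w)).Subperm (w.map Prod.fst) := by
  induction fuel generalizing w with
  | zero => simp [allArcs, arcEnds]
  | succ fuel ih =>
    simp only [allArcs, arcEnds, List.flatMap_append] at ih ⊢
    exact ((List.subperm_append_left _).mpr (ih _)).trans
      (List.perm_append_comm.trans (elimIdx_perm w)).subperm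

theorem fst_lt_snd_of_mem_allArcs (hw : (w.map Prod.fst).Pairwise (· < ·)) {fuel : ℕ}
    {a : ℕ × ℕ} (ha : a ∈ allArcs fuel w) : a.1 < a.2 := by
  simpa using hw.sublist ((sublist_of_mem_allArcs ha).map Prod.fst)

theorem List.Pairwise.not_lt_lt_of_pair_infix {l : List ℕ} (hl : l.Pairwise (· < ·))
    {x y z : ℕ} (h : [x, y] <:+: l) (hz : z ∈ l) : ¬(x < z ∧ z < y) := by
  obtain ⟨s, t, rfl⟩ := h
  simp only [List.append_assoc, List.cons_append, List.nil_append, List.pairwise_append,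
    List.pairwise_cons, List.mem_append, List.mem_cons] at hl hz
  rintro ⟨hxz, hzy⟩
  rcases hz with hz | rfl | rfl | hz
  · exact absurd (hl.2.2 z hz x (by simp)) (by omega)
  · omega
  · omega
  · exact absurd (hl.2.1.2.1 z hz) (by omega)

theorem nonCrossing_of_infix (hw : (w.map Prod.fst).Pairwise (· < ·)) {a b : ℕ × ℕ}
    (ha : [(a.1, true), (a.2, false)] <:+: w) (hb : [(b.1, true), (b.2, false)] <+ w) :
    NonCrossing a b := by
  have ha' : [a.1, a.2] <:+: w.map Prod.fst := by simpa using ha.map Prod.fst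
  have hb₁ : b.1 ∈ w.map Prod.fst := List.mem_map.mpr ⟨(b.1, true), hb.subset (by simp), rfl⟩
  have hb₂ : b.2 ∈ w.map Prod.fst := List.mem_map.mpr ⟨(b.2, false), hb.subset (by simp), rfl⟩
  have h₁ := hw.not_lt_lt_of_pair_infix ha' hb₁
  have h₂ := hw.not_lt_lt_of_pair_infix ha' hb₂
  constructor <;> omega

theorem pairwise_nonCrossing_allArcs (fuel : ℕ) (hw : (w.map Prod.fst).Pairwise (· < ·)) :
    (allArcs fuel w).Pairwise NonCrossing := by
  induction fuel generalizing w with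
  | zero => simp [allArcs]
  | succ fuel ih =>
    have hsurv := hw.sublist ((elimIdx_fst_sublist w).map Prod.fst)
    have hpass {a b} (ha : a ∈ (elimIdx w).2) (hb : b ∈ allArcs (fuel + 1) w) :
        NonCrossing a b :=
      nonCrossing_of_infix hw (infix_of_mem_elimIdx_snd ha) (sublist_of_mem_allArcs hb)
    rw [allArcs, List.pairwise_append]
    refine ⟨List.pairwise_of_forall_mem_list fun a ha b hb => hpass ha ?_, ih hsurv,
      fun a ha b hb => hpass ha ?_⟩
    · exact List.mem_append_left _ hb
    · exact List.mem_append_right _ hb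

end Elimination

theorem pairwise_disjoint_of_nodup_arcEnds {arcs : List (ℕ × ℕ)} (h : (arcEnds arcs).Nodup) :
    arcs.Pairwise fun a b => a.1 ≠ b.1 ∧ a.1 ≠ b.2 ∧ a.2 ≠ b.1 ∧ a.2 ≠ b.2 := by
  induction arcs with
  | nil => simp
  | cons a arcs ih =>
    simp only [arcEnds, List.flatMap_cons, List.cons_append, List.nil_append, List.nodup_cons,
      List.mem_cons, not_or] at h
    obtain ⟨⟨-, ha₁⟩, ha₂, h⟩ := h
    refine List.pairwise_cons.mpr ⟨fun b hb => ?_, ih h⟩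
    have hb₁ : b.1 ∈ arcEnds arcs := List.mem_flatMap.mpr ⟨b, hb, by simp⟩
    have hb₂ : b.2 ∈ arcEnds arcs := List.mem_flatMap.mpr ⟨b, hb, by simp⟩
    exact ⟨fun e => ha₁ (e ▸ hb₁), fun e => ha₁ (e ▸ hb₂), fun e => ha₂ (e ▸ hb₁),
      fun e => ha₂ (e ▸ hb₂)⟩

section Flip

theorem count_true_map_flip (w : List (ℕ × Bool)) (P : ℕ → Bool) :
    (w.map fun x => if P x.1 then !x.2 else x.2).count true
        + (w.filter (P ·.1)).countP (·.2)
      = (w.map Prod.snd).count true + (w.filter (P ·.1)).countP (!·.2) := by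
  induction w with
  | nil => simp
  | cons x w ih =>
    obtain ⟨i, b⟩ := x
    cases hi : P i <;> cases b <;> simp [hi] at ih ⊢ <;> omega

variable {p : List Bool} {arcs : List (ℕ × ℕ)}

theorem filter_indexed_perm_of_nodup_arcEnds (hnd : (arcEnds arcs).Nodup)
    (harc : ∀ a ∈ arcs, p[a.1]? = some true ∧ p[a.2]? = some false) :
    ((indexed p).filter fun x => arcs.any fun e => e.1 == x.1 || e.2 == x.1).Perm
      (arcs.flatMap fun a => [(a.1, true), (a.2, false)]) := by
  have hF : (arcs.flatMap fun a => [(a.1, true), (a.2, false)]).Nodup :=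
    List.Nodup.of_map Prod.fst (by simpa [arcEnds, List.map_flatMap] using hnd)
  refine (List.perm_ext_iff_of_nodup ((nodup_indexed p).filter _) hF).mpr fun ⟨i, b⟩ => ?_
  simp only [List.mem_filter, mem_indexed, List.any_eq_true, Bool.or_eq_true, beq_iff_eq,
    List.mem_flatMap, List.mem_cons, Prod.mk.injEq, List.not_mem_nil, or_false]
  constructor
  · rintro ⟨hib, e, he, rfl | rfl⟩
    · exact ⟨e, he, Or.inl ⟨rfl, by simpa [hib] using (harc e he).1⟩⟩
    · exact ⟨e, he, Or.inr ⟨rfl, by simpa [hib] using (harc e he).2⟩⟩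
  · rintro ⟨e, he, ⟨rfl, rfl⟩ | ⟨rfl, rfl⟩⟩
    · exact ⟨(harc e he).1, e, he, Or.inl rfl⟩
    · exact ⟨(harc e he).2, e, he, Or.inr rfl⟩

theorem count_true_flipArcs (hnd : (arcEnds arcs).Nodup)
    (harc : ∀ a ∈ arcs, p[a.1]? = some true ∧ p[a.2]? = some false) :
    (flipArcs p arcs).count true = p.count true := by
  have key := count_true_map_flip (indexed p) fun i => arcs.any fun e => e.1 == i || e.2 == i
  rw [(filter_indexed_perm_of_nodup_arcEnds hnd harc).countP_eq,
    (filter_indexed_perm_of_nodup_arcEnds hnd harc).countP_eq, map_snd_indexed] at key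
  have hones : (arcs.flatMap fun a => [(a.1, true), (a.2, false)]).countP (·.2) = arcs.length := by
    simp [List.countP_flatMap, Function.comp_def]
  have hzeros : (arcs.flatMap fun a => [(a.1, true), (a.2, false)]).countP (!·.2) = arcs.length := by
    simp [List.countP_flatMap, Function.comp_def]
  rw [hones, hzeros, Nat.add_right_cancel_iff] at key
  rw [flipArcs, mapIdx_eq_map_indexed]
  exact key

end Flip

/-- The arcs form a non-crossing matching: every arc joins a 1 (left endpoint)
to a 0 (right endpoint), the arcs are pairwise disjoint and non-crossing, and
the time evolution `T_∞` obtained by swapping along all arcs preserves the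
number of 1s. -/
theorem stmt19 (p : List Bool) :
    (∀ a ∈ arcsOf p, a.1 < a.2 ∧ p[a.1]? = some true ∧ p[a.2]? = some false)
    ∧ (arcsOf p).Pairwise (fun a b =>
        a.1 ≠ b.1 ∧ a.1 ≠ b.2 ∧ a.2 ≠ b.1 ∧ a.2 ≠ b.2
        ∧ ¬(a.1 < b.1 ∧ b.1 < a.2 ∧ a.2 < b.2)
        ∧ ¬(b.1 < a.1 ∧ a.1 < b.2 ∧ b.2 < a.2))
    ∧ (flipArcs p (arcsOf p)).count true = p.count true := by
  have hw : ((indexed p).map Prod.fst).Pairwise (· < ·) := by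
    rw [map_fst_indexed]; exact List.pairwise_lt_range
  have hnd : (arcEnds (arcsOf p)).Nodup := by
    obtain ⟨l, hperm, hsub⟩ := arcEnds_allArcs_subperm p.length (indexed p)
    rw [map_fst_indexed] at hsub
    exact hperm.nodup_iff.mp (hsub.nodup List.nodup_range)
  have harc (a) (ha : a ∈ arcsOf p) : p[a.1]? = some true ∧ p[a.2]? = some false :=
    ⟨mem_indexed.mp ((sublist_of_mem_allArcs ha).subset (by simp)),
      mem_indexed.mp ((sublist_of_mem_allArcs ha).subset (by simp))⟩
  refine ⟨fun a ha => ⟨fst_lt_snd_of_mem_allArcs hw ha, harc a ha⟩, ?_,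
    count_true_flipArcs hnd harc⟩
  exact ((pairwise_disjoint_of_nodup_arcEnds hnd).and
    (pairwise_nonCrossing_allArcs p.length hw)).imp fun h => ⟨h.1.1, h.1.2.1, h.1.2.2.1, h.1.2.2.2, h.2⟩
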